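/- Let X be a normal complex projective surface with canonical singularities q_1, ..., q_h and smooth elsewhere, with Kodaira dimension κ(X) ≥ 0. Let f: T → X be the minimal resolution, p: T → W the morphism to the minimal model, and s = K_W² - K_T². Then Σ_{i=1}^h ν(q_i) ≤ 12χ(O_X) - (4/3)K_X² - s/3, where ν(q) = e(Δ_q) - 1/|G_q| with Δ_q the exceptional divisor over q in the minimal resolution and G_q the local fundamental group. In particular, if equality Σν(q_i) = 12χ(O_X) - (4/3)K_X² holds, then K_X is nef. -/

import Mathlib

/-- An abstract smooth complex projective surface: its group of divisors with
intersection pairing, canonical divisor, effective cone, irreducible curves,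
arithmetic genus (satisfying adjunction), and cohomology dimensions
`h⁰(D, O_D)`, `h¹(D, O_D)`, `h⁰(D, ω_D)`. -/
structure Surface where
  Div : Type
  grp : AddCommGroup Div
  inter : Div → Div → ℤ
  inter_comm : ∀ A B, inter A B = inter B A
  inter_add_left : ∀ A B C, inter (A + B) C = inter A C + inter B C
  K : Div
  Eff : Div → Prop
  eff_zero : Eff 0
  eff_add : ∀ {A B}, Eff A → Eff B → Eff (A + B)
  Irr : Div → Prop
  irr_curve : ∀ {A}, Irr A → Eff A ∧ A ≠ 0
  pa : Div → ℤ
  adjunction : ∀ D, 2 * pa D - 2 = inter K D + inter D D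
  h0O : Div → ℕ
  h1O : Div → ℕ
  h0ω : Div → ℕ
  pa_def : ∀ D, (1 : ℤ) - pa D = (h0O D : ℤ) - (h1O D : ℤ)
  serre : ∀ D, h0ω D = h1O D

attribute [instance] Surface.grp

/-- A curve is a nonzero effective divisor. -/
def Surface.Curve (S : Surface) (D : S.Div) : Prop := S.Eff D ∧ D ≠ 0

/-- `D` is 1-connected: it is a curve and every decomposition `D = A + B`
into curves satisfies `A·B ≥ 1`. -/
def Surface.OneConnected (S : Surface) (D : S.Div) : Prop :=
  S.Curve D ∧ ∀ A B : S.Div, S.Curve A → S.Curve B → A + B = D → 1 ≤ S.inter A B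

/-- The data of a birational morphism `p : T → W` of smooth projective surfaces,
a composition of `s` blow-ups, recorded on the source surface `S = T`:
the total exceptional divisors `E 1, …, E s` (total transforms of the exceptional
curves of the blow-ups), the pullback `pK = p*K_W` of the canonical divisor of `W`,
and the predicate `Exc` of being supported on the `p`-exceptional locus
(i.e. contracted by `p` to a finite set of points). -/
structure Blowdown (S : Surface) (s : ℕ) where
  E : Fin s → S.Div
  pK : S.Div
  Exc : S.Div → Prop
  exc_zero : Exc 0
  exc_sub : ∀ {A B}, Exc A → Exc B → Exc (A - B)
  exc_E : ∀ i, Exc (E i)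
  exc_comp : ∀ {D Γ}, Exc D → S.Eff D → S.Irr Γ → S.Eff (D - Γ) → Exc Γ
  E_curve : ∀ i, S.Curve (E i)
  K_eq : S.K = pK + ∑ i, E i
  pK_exc : ∀ {D}, Exc D → S.inter pK D = 0
  EE : ∀ i j, S.inter (E i) (E j) = if i = j then -1 else 0
  negdef : ∀ {D}, Exc D → D ≠ 0 → S.inter D D < 0
  exc_span : ∀ {D}, Exc D → (∀ i, S.inter D (E i) = 0) → D = 0

/-- The dual graph of a configuration of irreducible curves `C i`: vertices are the
curves, and two distinct curves are adjacent when they meet (intersection number 1). -/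
def configGraph (S : Surface) {n : ℕ} (C : Fin n → S.Div) : SimpleGraph (Fin n) where
  Adj i j := i ≠ j ∧ S.inter (C i) (C j) = 1
  symm := ⟨fun i j hij => ⟨hij.1.symm, by rw [S.inter_comm]; exact hij.2⟩⟩
  loopless := ⟨fun i hi => hi.1 rfl⟩

/-- An A-D-E configuration on `S`: a reduced divisor `∑ C i` whose components `C i`
are distinct `-2`-curves (irreducible, `C i² = -2`, `K·C i = 0`), meeting pairwise
transversally in at most one point, whose dual graph is a tree (connected and acyclic)
and whose intersection matrix is negative definite; these conditions characterize the
configurations whose dual graph is a Dynkin diagram of type Aₙ, Dₙ or Eₙ. -/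
structure ADEConfig (S : Surface) where
  n : ℕ
  npos : 0 < n
  C : Fin n → S.Div
  irr : ∀ i, S.Irr (C i)
  inj : Function.Injective C
  sq : ∀ i, S.inter (C i) (C i) = -2
  KC : ∀ i, S.inter S.K (C i) = 0
  int01 : ∀ i j, i ≠ j → S.inter (C i) (C j) = 0 ∨ S.inter (C i) (C j) = 1
  tree : (configGraph S C).IsTree
  negdef : ∀ a : Fin n → ℤ, a ≠ 0 → ∑ i, ∑ j, a i * a j * S.inter (C i) (C j) < 0

/-- The configuration is of type `Aₙ`: its dual graph is a path. -/
def ADEConfig.IsTypeA {S : Surface} (Δ : ADEConfig S) : Prop :=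
  ∃ e : Fin Δ.n ≃ Fin Δ.n, ∀ i j : Fin Δ.n,
    (configGraph S Δ.C).Adj (e i) (e j) ↔ ((i : ℕ) + 1 = (j : ℕ) ∨ (j : ℕ) + 1 = (i : ℕ))

/-!
Write `K_T = p^*K_W + ∑ Eᵢ`; then `K_T² = K_W² - s`, and Miyaoka's inequality on `W` bounds the
configurations not contracted by `p`. A contracted configuration `Δ` contributes `ν ≤ n_Δ + 1`.
The intersection numbers with `E₁, …, E_s` send its components to independent integer vectors
of square length `2` and coordinate sum `0`, i.e. to roots `eᵢ - eⱼ`; orthogonal roots have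
disjoint supports, and `n_Δ` independent vectors of coordinate sum `0` need at least `n_Δ + 1`
coordinates. Hence the contracted configurations contribute at most `s`, which gives the
inequality; equality forces `s = 0`, so `K_T = p^*K_W` is nef.
-/

namespace Surface

variable {S : Surface}

theorem inter_add_right (A B C : S.Div) :
    S.inter A (B + C) = S.inter A B + S.inter A C := by
  rw [S.inter_comm, S.inter_add_left, S.inter_comm B A, S.inter_comm C A]

def interRight (S : Surface) (A : S.Div) : S.Div →+ ℤ :=
  AddMonoidHom.mk' (S.inter A) (inter_add_right A)

theorem inter_zero_left (A : S.Div) : S.inter 0 A = 0 := by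
  rw [S.inter_comm]; exact map_zero (S.interRight A)

theorem inter_sum_right {ι : Type*} (t : Finset ι) (A : S.Div) (f : ι → S.Div) :
    S.inter A (∑ i ∈ t, f i) = ∑ i ∈ t, S.inter A (f i) :=
  map_sum (S.interRight A) f t

theorem inter_sum_left {ι : Type*} (t : Finset ι) (A : S.Div) (f : ι → S.Div) :
    S.inter (∑ i ∈ t, f i) A = ∑ i ∈ t, S.inter (f i) A := by
  rw [S.inter_comm, inter_sum_right]
  exact Finset.sum_congr rfl fun i _ => S.inter_comm _ _

theorem inter_zsmul_right (c : ℤ) (A B : S.Div) :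
    S.inter A (c • B) = c * S.inter A B :=
  map_zsmul (S.interRight A) c B

theorem inter_zsmul_left (c : ℤ) (A B : S.Div) :
    S.inter (c • A) B = c * S.inter A B := by
  rw [S.inter_comm, inter_zsmul_right, S.inter_comm]

theorem inter_sub_left (A B C : S.Div) :
    S.inter (A - B) C = S.inter A C - S.inter B C := by
  rw [S.inter_comm, S.inter_comm A C, S.inter_comm B C]
  exact map_sub (S.interRight C) A B

end Surface

namespace ADEConfig

variable {S : Surface} (Δ : ADEConfig S)

theorem inter_sum_zsmul_self (g : Fin Δ.n → ℤ) :
    S.inter (∑ a, g a • Δ.C a) (∑ a, g a • Δ.C a) =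
      ∑ a, ∑ b, g a * g b * S.inter (Δ.C a) (Δ.C b) := by
  simp only [Surface.inter_sum_left, Surface.inter_sum_right, Surface.inter_zsmul_left,
    Surface.inter_zsmul_right, Finset.mul_sum]
  exact Finset.sum_congr rfl fun a _ => Finset.sum_congr rfl fun b _ => by
    rw [S.inter_comm (Δ.C b)]; ring

theorem linearIndependent : LinearIndependent ℤ Δ.C := by
  rw [Fintype.linearIndependent_iff]
  intro g hg
  by_contra! hne
  have hneg := Δ.negdef g (Function.ne_iff.mpr hne)
  rw [← inter_sum_zsmul_self, hg, Surface.inter_zero_left] at hneg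
  exact lt_irrefl _ hneg

end ADEConfig

/-- Adjoining a basis vector `e_{i₀}` with `i₀ ∈ T` keeps the family independent, since `e_{i₀}`
lies outside the hyperplane of coordinate sum `0`. -/
theorem card_add_one_le_card_of_sum_eq_zero {ι κ : Type*} [Fintype κ] {v : κ → ι → ℤ}
    (hv : LinearIndependent ℤ v) {T : Finset ι} (hT : T.Nonempty)
    (hsupp : ∀ a, ∀ i ∉ T, v a i = 0) (hsum : ∀ a, ∑ i ∈ T, v a i = 0) :
    Fintype.card κ + 1 ≤ T.card := by
  classical
  obtain ⟨i₀, hi₀⟩ := hT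
  let w : Option κ → T → ℤ := fun o =>
    o.elim (Pi.single ⟨i₀, hi₀⟩ 1) (fun a i => v a i)
  have hw : LinearIndependent ℤ w := by
    rw [Fintype.linearIndependent_iff]
    intro g hg
    rw [Fintype.sum_option] at hg
    have hnone : g none = 0 := by
      have hsumT := congrArg (fun u : T → ℤ => ∑ i, u i) hg
      simp only [w, Option.elim, Finset.sum_apply, Pi.add_apply, Pi.smul_apply, smul_eq_mul,
        Finset.sum_add_distrib, Pi.zero_apply, Finset.sum_const_zero] at hsumT
      rw [Finset.sum_comm] at hsumT
      simpa [← Finset.mul_sum, Finset.sum_attach T (v _), hsum] using hsumT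
    have hsome : ∑ a, g (some a) • v a = 0 := by
      funext i
      by_cases hi : i ∈ T
      · simpa [w, hnone] using congrFun hg ⟨i, hi⟩
      · simp [hsupp _ i hi]
    rintro (_ | a)
    exacts [hnone, Fintype.linearIndependent_iff.mp hv _ hsome a]
  simpa using hw.fintype_card_le_finrank

theorem mul_self_lt_sum_mul_self_of_sum_eq_zero {ι : Type*} [Fintype ι] [DecidableEq ι]
    {v : ι → ℤ} (hv : ∑ i, v i = 0) {m : ι} (hm : v m ≠ 0) :
    v m * v m < ∑ i, v i * v i := by
  rw [← Finset.add_sum_erase _ _ (Finset.mem_univ m)]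
  by_contra! hle
  have hrest : ∀ i ∈ Finset.univ.erase m, v i = 0 := fun i hi =>
    mul_self_eq_zero.mp <| (Finset.sum_eq_zero_iff_of_nonneg fun j _ => mul_self_nonneg (v j)).mp
      (le_antisymm (by linarith) (Finset.sum_nonneg fun j _ => mul_self_nonneg (v j))) i hi
  rw [← Finset.add_sum_erase _ _ (Finset.mem_univ m), Finset.sum_eq_zero hrest] at hv
  exact hm (by simpa using hv)

/-- The hypotheses say that `c` and `d` are orthogonal roots `eᵢ - eⱼ`. If both were nonzero at
`m`, then for `ε = c m * d m = ±1` the vector `c + ε d` would have square length `4`, coordinate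
sum `0` and entry `2 c m = ±2` at `m`. -/
theorem eq_zero_or_eq_zero_of_roots_orthogonal {ι : Type*} [Fintype ι] {c d : ι → ℤ}
    (hc : ∑ i, c i * c i = 2) (hd : ∑ i, d i * d i = 2)
    (hc₀ : ∑ i, c i = 0) (hd₀ : ∑ i, d i = 0) (hcd : ∑ i, c i * d i = 0) (m : ι) :
    c m = 0 ∨ d m = 0 := by
  classical
  by_contra! hm
  have unit_sq : ∀ {u : ι → ℤ}, ∑ i, u i * u i = 2 → u m ≠ 0 → u m * u m = 1 := by
    intro u hu hum
    have hle : u m * u m ≤ 2 :=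
      hu ▸ Finset.single_le_sum (fun j _ => mul_self_nonneg (u j)) (Finset.mem_univ m)
    have hm₁ : u m ≤ 1 := by nlinarith
    have hm₂ : -1 ≤ u m := by nlinarith
    rcases (by omega : u m = -1 ∨ u m = 1) with h | h <;> rw [h] <;> norm_num
  set ε := c m * d m
  have hsq : ∑ i, (c i + ε * d i) * (c i + ε * d i) = 4 := by
    have hε : ε * ε = 1 := by
      linear_combination (d m * d m) * unit_sq hc hm.1 + unit_sq hd hm.2
    have hexpand : ∀ i, (c i + ε * d i) * (c i + ε * d i) =
        c i * c i + 2 * ε * (c i * d i) + ε * ε * (d i * d i) := fun i => by ring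
    simp only [hexpand, Finset.sum_add_distrib, ← Finset.mul_sum, hc, hd, hcd, hε]
    norm_num
  have hsum : ∑ i, (c i + ε * d i) = 0 := by
    rw [Finset.sum_add_distrib, ← Finset.mul_sum, hc₀, hd₀, mul_zero, add_zero]
  have hentry : c m + ε * d m = 2 * c m := by
    linear_combination c m * unit_sq hd hm.2
  have hlt := mul_self_lt_sum_mul_self_of_sum_eq_zero hsum
    (m := m) (by rw [hentry]; exact mul_ne_zero two_ne_zero hm.1)
  rw [hsq, hentry] at hlt
  linarith [unit_sq hc hm.1]

namespace Blowdown

variable {S : Surface} {s : ℕ} (B : Blowdown S s)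

def excSubgroup : AddSubgroup S.Div where
  carrier := {D | B.Exc D}
  zero_mem' := B.exc_zero
  add_mem' {A C} hA hC := by
    simpa using B.exc_sub hA (B.exc_sub B.exc_zero hC)
  neg_mem' {A} hA := by simpa using B.exc_sub B.exc_zero hA

theorem exc_sum_zsmul {ι : Type*} [Fintype ι] (c : ι → ℤ) {f : ι → S.Div}
    (hf : ∀ i, B.Exc (f i)) : B.Exc (∑ i, c i • f i) :=
  AddSubgroup.sum_mem B.excSubgroup fun i _ => AddSubgroup.zsmul_mem B.excSubgroup (hf i) (c i)

def coord : S.Div →+ (Fin s → ℤ) :=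
  AddMonoidHom.mk' (fun D i => S.inter D (B.E i))
    (fun A C => funext fun i => S.inter_add_left A C (B.E i))

theorem coord_apply (D : S.Div) (i : Fin s) : B.coord D i = S.inter D (B.E i) := rfl

theorem eq_zero_of_coord_eq_zero {D : S.Div} (hD : B.Exc D) (h : B.coord D = 0) : D = 0 :=
  B.exc_span hD fun i => congrFun h i

theorem eq_sum_coord_zsmul {D : S.Div} (hD : B.Exc D) :
    D = ∑ i, (-B.coord D i) • B.E i := by
  refine sub_eq_zero.mp (B.eq_zero_of_coord_eq_zero
    (B.exc_sub hD (B.exc_sum_zsmul _ B.exc_E)) (funext fun j => ?_))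
  simp only [coord_apply, Pi.zero_apply, Surface.inter_sub_left, Surface.inter_sum_left,
    Surface.inter_zsmul_left, B.EE, mul_ite, mul_neg, mul_one, mul_zero,
    Finset.sum_ite_eq', Finset.mem_univ, if_true, neg_neg, sub_self]

theorem inter_eq_neg_sum_coord_mul {D : S.Div} (hD : B.Exc D) (D' : S.Div) :
    S.inter D D' = -∑ i, B.coord D i * B.coord D' i := by
  conv_lhs => rw [B.eq_sum_coord_zsmul hD]
  simp only [Surface.inter_sum_left, Surface.inter_zsmul_left, ← Finset.sum_neg_distrib,
    coord_apply, S.inter_comm (B.E _) D', neg_mul]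

theorem sum_coord_eq_inter_K {D : S.Div} (hD : B.Exc D) :
    ∑ i, B.coord D i = S.inter S.K D := by
  rw [B.K_eq, S.inter_add_left, B.pK_exc hD, zero_add, Surface.inter_sum_left]
  exact Finset.sum_congr rfl fun i _ => S.inter_comm _ _

theorem inter_K_K : S.inter S.K S.K = S.inter B.pK B.pK - s := by
  have hpKE : S.inter B.pK (∑ i, B.E i) = 0 :=
    (Surface.inter_sum_right _ _ _).trans (Finset.sum_eq_zero fun i _ => B.pK_exc (B.exc_E i))
  have hEE : S.inter (∑ i, B.E i) (∑ i, B.E i) = -s := by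
    simp [Surface.inter_sum_left, Surface.inter_sum_right, B.EE]
  rw [B.K_eq, S.inter_add_left, Surface.inter_add_right, Surface.inter_add_right, hpKE,
    S.inter_comm (∑ i, B.E i), hpKE, hEE]
  ring

theorem K_eq_pK (B : Blowdown S 0) : S.K = B.pK := by
  simp [B.K_eq]

def support (Δ : ADEConfig S) : Finset (Fin s) :=
  {i | ∃ a, B.coord (Δ.C a) i ≠ 0}

variable {B} {Δ Δ' : ADEConfig S}

theorem sum_coord_mul_self (hΔ : ∀ a, B.Exc (Δ.C a)) (a : Fin Δ.n) :
    ∑ i, B.coord (Δ.C a) i * B.coord (Δ.C a) i = 2 := by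
  have := B.inter_eq_neg_sum_coord_mul (hΔ a) (Δ.C a)
  rw [Δ.sq] at this
  linarith

theorem sum_coord (hΔ : ∀ a, B.Exc (Δ.C a)) (a : Fin Δ.n) : ∑ i, B.coord (Δ.C a) i = 0 :=
  (B.sum_coord_eq_inter_K (hΔ a)).trans (Δ.KC a)

theorem linearIndependent_coord (hΔ : ∀ a, B.Exc (Δ.C a)) :
    LinearIndependent ℤ fun a => B.coord (Δ.C a) := by
  rw [Fintype.linearIndependent_iff]
  intro g hg
  refine Fintype.linearIndependent_iff.mp Δ.linearIndependent g
    (B.eq_zero_of_coord_eq_zero (B.exc_sum_zsmul g hΔ) ?_)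
  simpa only [map_sum, map_zsmul] using hg

theorem coord_eq_zero_of_notMem_support (a : Fin Δ.n) {i : Fin s} (hi : i ∉ B.support Δ) :
    B.coord (Δ.C a) i = 0 := by
  simp only [support, Finset.mem_filter, Finset.mem_univ, true_and, not_exists, not_not] at hi
  exact hi a

theorem add_one_le_card_support (hΔ : ∀ a, B.Exc (Δ.C a)) :
    Δ.n + 1 ≤ (B.support Δ).card := by
  have hne : (B.support Δ).Nonempty := by
    obtain ⟨i, hi⟩ := Function.ne_iff.mp ((linearIndependent_coord hΔ).ne_zero ⟨0, Δ.npos⟩)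
    exact ⟨i, Finset.mem_filter.mpr ⟨Finset.mem_univ i, _, hi⟩⟩
  have hsum : ∀ a, ∑ i ∈ B.support Δ, B.coord (Δ.C a) i = 0 := fun a => by
    rw [Finset.sum_subset (Finset.subset_univ _) fun i _ hi =>
      coord_eq_zero_of_notMem_support a hi]
    exact sum_coord hΔ a
  simpa using card_add_one_le_card_of_sum_eq_zero (linearIndependent_coord hΔ) hne
    (fun a _ hi => coord_eq_zero_of_notMem_support a hi) hsum

theorem disjoint_support (hΔ : ∀ a, B.Exc (Δ.C a)) (hΔ' : ∀ b, B.Exc (Δ'.C b))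
    (horth : ∀ a b, S.inter (Δ.C a) (Δ'.C b) = 0) :
    Disjoint (B.support Δ) (B.support Δ') := by
  rw [Finset.disjoint_left]
  intro i hi hi'
  obtain ⟨a, ha⟩ := (Finset.mem_filter.mp hi).2
  obtain ⟨b, hb⟩ := (Finset.mem_filter.mp hi').2
  have hcd : ∑ i, B.coord (Δ.C a) i * B.coord (Δ'.C b) i = 0 := by
    have := B.inter_eq_neg_sum_coord_mul (hΔ a) (Δ'.C b)
    rw [horth] at this
    linarith
  rcases eq_zero_or_eq_zero_of_roots_orthogonal (sum_coord_mul_self hΔ a)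
    (sum_coord_mul_self hΔ' b) (sum_coord hΔ a) (sum_coord hΔ' b) hcd i with h | h
  exacts [ha h, hb h]

theorem sum_n_add_one_le {ι : Type*} (Δ : ι → ADEConfig S) {Q : Finset ι}
    (hexc : ∀ q ∈ Q, ∀ a, B.Exc ((Δ q).C a))
    (horth : ∀ q ∈ Q, ∀ q' ∈ Q, q ≠ q' → ∀ a b, S.inter ((Δ q).C a) ((Δ q').C b) = 0) :
    ∑ q ∈ Q, ((Δ q).n + 1) ≤ s := by
  classical
  calc ∑ q ∈ Q, ((Δ q).n + 1)
      ≤ ∑ q ∈ Q, (B.support (Δ q)).card :=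
        Finset.sum_le_sum fun q hq => add_one_le_card_support (hexc q hq)
    _ = (Q.biUnion fun q => B.support (Δ q)).card :=
        (Finset.card_biUnion fun q hq q' hq' hne =>
          disjoint_support (hexc q hq) (hexc q' hq') (horth q hq q' hq' hne)).symm
    _ ≤ s := by simpa using Finset.card_le_univ (Q.biUnion fun q => B.support (Δ q))

end Blowdown

theorem stmt19_general (S : Surface) (s : ℕ) (B : Blowdown S s)
    (hnef : ∀ D : S.Div, S.Curve D → 0 ≤ S.inter B.pK D)
    (h : ℕ) (Δ : Fin h → ADEConfig S)
    (hdisj : ∀ q q' : Fin h, q ≠ q' → ∀ a b,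
      (Δ q).C a ≠ (Δ q').C b ∧ S.inter ((Δ q).C a) ((Δ q').C b) = 0)
    (G : Fin h → ℕ)
    (χ : ℤ)
    (ν : Fin h → ℚ) (hν : ∀ q, ν q = ((Δ q).n + 1 : ℚ) - 1 / (G q : ℚ))
    (Qc : Finset (Fin h)) (hQc : ∀ q, q ∈ Qc ↔ ∀ a, B.Exc ((Δ q).C a))
    (hMiyaoka : ∑ q ∈ Qcᶜ, ν q ≤
      12 * (χ : ℚ) - (4 / 3) * (S.inter B.pK B.pK : ℚ)) :
    (∑ q, ν q ≤ 12 * (χ : ℚ) - (4 / 3) * (S.inter S.K S.K : ℚ) - (s : ℚ) / 3) ∧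
    (∑ q, ν q = 12 * (χ : ℚ) - (4 / 3) * (S.inter S.K S.K : ℚ) →
      ∀ D : S.Div, S.Curve D → 0 ≤ S.inter S.K D) := by
  have hcontracted : ∑ q ∈ Qc, ν q ≤ s := by
    have hcount := B.sum_n_add_one_le Δ (fun q hq => (hQc q).mp hq)
      fun q _ q' _ hne a b => (hdisj q q' hne a b).2
    calc ∑ q ∈ Qc, ν q ≤ ∑ q ∈ Qc, ((Δ q).n + 1 : ℚ) :=
          Finset.sum_le_sum fun q _ => by
            rw [hν q]
            linarith [one_div_nonneg.mpr (Nat.cast_nonneg (α := ℚ) (G q))]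
      _ ≤ s := by exact_mod_cast hcount
  have hKK : (S.inter S.K S.K : ℚ) = S.inter B.pK B.pK - s := by
    exact_mod_cast B.inter_K_K
  have hbound : ∑ q, ν q ≤ 12 * (χ : ℚ) - (4 / 3) * (S.inter S.K S.K : ℚ) - (s : ℚ) / 3 := by
    rw [← Finset.sum_add_sum_compl Qc ν, hKK]
    linarith
  refine ⟨hbound, fun heq D hD => ?_⟩
  obtain rfl : s = 0 := by
    have : (s : ℚ) ≤ 0 := by linarith
    exact_mod_cast this.antisymm s.cast_nonneg
  rw [B.K_eq_pK]
  exact hnef D hD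

/-- let `X` be a normal projective surface with canonical
singularities `q₁, …, q_h`, smooth elsewhere, with `κ(X) ≥ 0`; let `f : T → X` be
the minimal resolution (so `K_X² = K_T²`, `χ(O_X) = χ(O_T)`, and the exceptional
divisors `Δ_q` are disjoint A-D-E configurations on `T`), and `p : T → W` the
morphism to the minimal model (so `K_W` is nef and `s = K_W² - K_T²`).  With
`ν(q) = e(Δ_q) - 1/|G_q| = (n_q + 1) - 1/|G_q|` (`G_q` the local fundamental
group, of order `n_q + 1` for an `A_{n_q}` singularity), Miyaoka's inequality for
the (nef) canonical divisor of `W` applied to the configurations not contracted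
by `p` yields `∑ ν(qᵢ) ≤ 12χ(O_X) - (4/3)K_X² - s/3`; in particular, if
`∑ ν(qᵢ) = 12χ(O_X) - (4/3)K_X²` then `K_X` (equivalently `K_T = f*K_X`) is nef. -/
theorem stmt19 (S : Surface) (s : ℕ) (B : Blowdown S s)
    (hnef : ∀ D : S.Div, S.Curve D → 0 ≤ S.inter B.pK D)
    (h : ℕ) (Δ : Fin h → ADEConfig S)
    (hdisj : ∀ q q' : Fin h, q ≠ q' → ∀ a b,
      (Δ q).C a ≠ (Δ q').C b ∧ S.inter ((Δ q).C a) ((Δ q').C b) = 0)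
    (G : Fin h → ℕ) (hG : ∀ q, 0 < G q)
    (hGA : ∀ q, (Δ q).IsTypeA → G q = (Δ q).n + 1)
    (χ : ℤ)
    (ν : Fin h → ℚ) (hν : ∀ q, ν q = ((Δ q).n + 1 : ℚ) - 1 / (G q : ℚ))
    (Qc : Finset (Fin h)) (hQc : ∀ q, q ∈ Qc ↔ ∀ a, B.Exc ((Δ q).C a))
    (hMiyaoka : ∑ q ∈ Qcᶜ, ν q ≤
      12 * (χ : ℚ) - (4 / 3) * (S.inter B.pK B.pK : ℚ)) :
    (∑ q, ν q ≤ 12 * (χ : ℚ) - (4 / 3) * (S.inter S.K S.K : ℚ) - (s : ℚ) / 3) ∧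
    (∑ q, ν q = 12 * (χ : ℚ) - (4 / 3) * (S.inter S.K S.K : ℚ) →
      ∀ D : S.Div, S.Curve D → 0 ≤ S.inter S.K D) :=
  stmt19_general S s B hnef h Δ hdisj G χ ν hν Qc hQc hMiyaoka
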